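/- Let P₀ > 0 and I : ℕ≥1 → ℝ≥0 with I(i) nonincreasing and I := Σ_{i≥1} I(i) < ∞. Define ξ(k) = min over l ∈ {0,...,k} of (1/(l+1))·C((P₀ + Σ_{i=k-l+1}^{k} I(i))/(1 + Σ_{i>k} I(i))), with C(x)=log₂(1+x). Then for all k, 0 ≤ ξ(k) ≤ C(P₀+I)/(k+1); consequently ξ(k) → 0 as k → ∞, ξ(0) > 0, and ξ attains its supremum at some finite k. -/

import Mathlib

/-!
Taking `l = k` in the minimum bounds `ξ(k)` by `C(P₀ + ∑_{1 ≤ i ≤ k} I(i)) / (k + 1) ≤ C(P₀ + I) / (k + 1)`,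
so `ξ(k) → 0`, while `ξ(0) = C(P₀ / (1 + I)) > 0`. Hence `ξ(k) < ξ(0)` for all but finitely many `k`,
and the maximum of `ξ` is the maximum over that finite set together with `0`.
-/

open Filter Finset Topology

noncomputable def C (x : ℝ) : ℝ := Real.logb 2 (1 + x)

noncomputable def xi (P0 : ℝ) (I : ℕ → ℝ) (k : ℕ) : ℝ :=
  (Finset.range (k + 1)).inf' Finset.nonempty_range_add_one
    (fun l => (1 / (l + 1 : ℝ)) *
      C ((P0 + ∑ i ∈ Finset.Icc (k - l + 1) k, I i) /
         (1 + ∑' i, I (i + k + 1))))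

theorem Filter.Tendsto.exists_forall_ge_of_lt {ι β : Type*} [LinearOrder β] [TopologicalSpace β]
    [ClosedIciTopology β] {f : ι → β} {a : β} (hf : Tendsto f cofinite (𝓝 a)) {i₀ : ι}
    (h : a < f i₀) : ∃ i, ∀ j, f j ≤ f i := by
  have hfin : {j | f i₀ ≤ f j}.Finite := by
    simpa only [not_lt] using eventually_cofinite.mp (hf.eventually (eventually_lt_nhds h))
  obtain ⟨i, hi, hmax⟩ := Set.exists_max_image _ f hfin ⟨i₀, le_refl (f i₀)⟩
  refine ⟨i, fun j => ?_⟩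
  by_cases hj : f i₀ ≤ f j
  · exact hmax j hj
  · exact (lt_of_not_ge hj).le.trans hi

theorem C_nonneg {x : ℝ} (hx : 0 ≤ x) : 0 ≤ C x :=
  Real.logb_nonneg one_lt_two (by linarith)

theorem C_pos {x : ℝ} (hx : 0 < x) : 0 < C x :=
  Real.logb_pos one_lt_two (by linarith)

theorem C_le_C {x y : ℝ} (hx : 0 ≤ x) (hxy : x ≤ y) : C x ≤ C y :=
  Real.logb_le_logb_of_le one_lt_two (by linarith) (by linarith)

theorem sum_Icc_one_le_tsum {I : ℕ → ℝ} (hnn : ∀ i, 0 ≤ I i) (hsum : Summable I) (k : ℕ) :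
    ∑ i ∈ Icc 1 k, I i ≤ ∑' i, I (i + 1) := by
  rw [← Ico_add_one_right_eq_Icc, sum_Ico_eq_sum_range, add_tsub_cancel_right]
  simp_rw [add_comm 1]
  exact ((summable_nat_add_iff 1).mpr hsum).sum_le_tsum _ fun i _ => hnn _

section xi

variable {P0 : ℝ} {I : ℕ → ℝ}

theorem one_le_one_add_tsum (hnn : ∀ i, 0 ≤ I i) (k : ℕ) : 1 ≤ 1 + ∑' i, I (i + k + 1) :=
  le_add_of_nonneg_right (tsum_nonneg fun _ => hnn _)

theorem xi_nonneg (hP : 0 ≤ P0) (hnn : ∀ i, 0 ≤ I i) (k : ℕ) : 0 ≤ xi P0 I k :=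
  le_inf' _ _ fun _ _ => mul_nonneg (by positivity) <| C_nonneg <|
    div_nonneg (add_nonneg hP (sum_nonneg fun i _ => hnn i))
      (zero_le_one.trans (one_le_one_add_tsum hnn k))

theorem xi_le_C_div (hP : 0 ≤ P0) (hnn : ∀ i, 0 ≤ I i) (hsum : Summable I) (k : ℕ) :
    xi P0 I k ≤ C (P0 + ∑' i, I (i + 1)) / (k + 1) := by
  have hS : 0 ≤ ∑ i ∈ Icc 1 k, I i := sum_nonneg fun i _ => hnn i
  have hden := one_le_one_add_tsum hnn k
  calc xi P0 I k
      ≤ 1 / (k + 1 : ℝ) * C ((P0 + ∑ i ∈ Icc 1 k, I i) / (1 + ∑' i, I (i + k + 1))) := by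
        refine (inf'_le _ (self_mem_range_succ k)).trans_eq ?_
        simp only [Nat.sub_self, zero_add]
    _ ≤ 1 / (k + 1 : ℝ) * C (P0 + ∑' i, I (i + 1)) := by
        gcongr
        refine C_le_C (div_nonneg (by positivity) (by positivity)) ?_
        calc _ ≤ P0 + ∑ i ∈ Icc 1 k, I i := div_le_self (by positivity) hden
          _ ≤ _ := add_le_add_right (sum_Icc_one_le_tsum hnn hsum k) _
    _ = C (P0 + ∑' i, I (i + 1)) / (k + 1) := one_div_mul_eq_div _ _

theorem xi_zero : xi P0 I 0 = C (P0 / (1 + ∑' i, I (i + 1))) := by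
  simp [xi]

end xi

theorem stmt_6_general (P0 : ℝ) (hP : 0 < P0) (I : ℕ → ℝ) (hnn : ∀ i, 0 ≤ I i)
    (hsum : Summable I) :
    (∀ k : ℕ, 0 ≤ xi P0 I k ∧ xi P0 I k ≤ C (P0 + ∑' i, I (i + 1)) / (k + 1)) ∧
    Filter.Tendsto (xi P0 I) Filter.atTop (nhds 0) ∧
    0 < xi P0 I 0 ∧
    ∃ kopt : ℕ, ∀ k : ℕ, xi P0 I k ≤ xi P0 I kopt := by
  have hbounds k : 0 ≤ xi P0 I k ∧ xi P0 I k ≤ C (P0 + ∑' i, I (i + 1)) / (k + 1) :=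
    ⟨xi_nonneg hP.le hnn k, xi_le_C_div hP.le hnn hsum k⟩
  have htend : Tendsto (xi P0 I) atTop (𝓝 0) := by
    refine squeeze_zero (fun k => (hbounds k).1) (fun k => (hbounds k).2) ?_
    simpa only [Function.comp_def, Nat.cast_succ] using
      (tendsto_const_div_atTop_nhds_zero_nat (C (P0 + ∑' i, I (i + 1)))).comp
        (tendsto_add_atTop_nat 1)
  have hpos : 0 < xi P0 I 0 := by
    rw [xi_zero]
    exact C_pos (div_pos hP (zero_lt_one.trans_le (by simpa using one_le_one_add_tsum hnn 0)))
  exact ⟨hbounds, htend, hpos, (Nat.cofinite_eq_atTop ▸ htend).exists_forall_ge_of_lt hpos⟩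

theorem stmt_6 (P0 : ℝ) (hP : 0 < P0) (I : ℕ → ℝ) (hnn : ∀ i, 0 ≤ I i)
    (hanti : ∀ i j, 1 ≤ i → i ≤ j → I j ≤ I i) (hsum : Summable I) :
    (∀ k : ℕ, 0 ≤ xi P0 I k ∧ xi P0 I k ≤ C (P0 + ∑' i, I (i + 1)) / (k + 1)) ∧
    Filter.Tendsto (xi P0 I) Filter.atTop (nhds 0) ∧
    0 < xi P0 I 0 ∧
    ∃ kopt : ℕ, ∀ k : ℕ, xi P0 I k ≤ xi P0 I kopt :=
  stmt_6_general P0 hP I hnn hsum
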